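/- arXiv:quant-ph/0512142 — 2 statements merged into one kernel-verified Lean document; each statement's English description precedes it below -/
import Mathlib

section
/- Let 0 < p < 1, 0 < q < 1, 0 < s < 1, and define the Pauli channels E_1, E_2, E_3 on 2×2 matrices with Kraus operators {√p I, √(1−p) X}, {√q I, √(1−q) Z}, and {√s X, √(1−s) Z}, respectively. Then supp(E_3) ⊆ supp(E_1) + supp(E_2), and consequently E_1, E_2, E_3 cannot be unambiguously discriminated by a single use: for every ancilla dimension d_a and every unit vector ψ ∈ ℂ² ⊗ ℂ^{d_a}, the three output states (E_i ⊗ I)(|ψ⟩⟨ψ|) are not unambiguously distinguishable. -/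
open Matrix Kronecker
open scoped ComplexOrder

noncomputable section

/-- A quantum operation on ℂ^d given by a finite family of Kraus operators
satisfying the completeness condition. -/
structure QuantumOp (d : ℕ) where
  m : ℕ
  K : Fin m → Matrix (Fin d) (Fin d) ℂ
  complete : ∑ k, (K k)ᴴ * K k = 1

/-- The support of a quantum operation: the span of its Kraus operators. -/
def QuantumOp.supp {d : ℕ} (E : QuantumOp d) : Submodule ℂ (Matrix (Fin d) (Fin d) ℂ) :=
  Submodule.span ℂ (Set.range E.K)

/-- The output state (E ⊗ I)(|ψ⟩⟨ψ|) = Σ_k (E^k ⊗ I)|ψ⟩⟨ψ|(E^k ⊗ I)†. -/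
def QuantumOp.output {d : ℕ} (E : QuantumOp d) (da : ℕ) (ψ : Fin d × Fin da → ℂ) :
    Matrix (Fin d × Fin da) (Fin d × Fin da) ℂ :=
  ∑ k, (E.K k ⊗ₖ (1 : Matrix (Fin da) (Fin da) ℂ)) * vecMulVec ψ (star ψ) *
    (E.K k ⊗ₖ (1 : Matrix (Fin da) (Fin da) ℂ))ᴴ

/-- States σ_1, …, σ_n are unambiguously distinguishable if there is a POVM
{Π_0, Π_1, …, Π_n} with tr(Π_i σ_j) = 0 for i ≠ j and tr(Π_i σ_i) > 0. -/
def UnambiguouslyDistinguishable {μ : Type*} [Fintype μ] [DecidableEq μ] {n : ℕ}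
    (σ : Fin n → Matrix μ μ ℂ) : Prop :=
  ∃ P0 : Matrix μ μ ℂ, ∃ P : Fin n → Matrix μ μ ℂ,
    P0.PosSemidef ∧ (∀ i, (P i).PosSemidef) ∧
    (P0 + ∑ i, P i = 1) ∧
    (∀ i j, i ≠ j → (P i * σ j).trace = 0) ∧
    (∀ i, 0 < (P i * σ i).trace)

/-- The Pauli X matrix. -/
def pauliX : Matrix (Fin 2) (Fin 2) ℂ := !![0, 1; 1, 0]

/-- The Pauli Z matrix. -/
def pauliZ : Matrix (Fin 2) (Fin 2) ℂ := !![1, 0; 0, -1]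

/-- The output state Σ_k (K_k ⊗ I)|ψ⟩⟨ψ|(K_k ⊗ I)† of the quantum operation with Kraus
operators K on the input |ψ⟩⟨ψ|, with an ancilla of dimension da. -/
def outputOf {d m da : ℕ} (K : Fin m → Matrix (Fin d) (Fin d) ℂ)
    (ψ : Fin d × Fin da → ℂ) : Matrix (Fin d × Fin da) (Fin d × Fin da) ℂ :=
  ∑ k, (K k ⊗ₖ (1 : Matrix (Fin da) (Fin da) ℂ)) * vecMulVec ψ (star ψ) *
    (K k ⊗ₖ (1 : Matrix (Fin da) (Fin da) ℂ))ᴴ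

/-- Kraus operators {√p I, √(1-p) X} of the bit-flip channel. -/
def bitFlipK (p : ℝ) : Fin 2 → Matrix (Fin 2) (Fin 2) ℂ :=
  ![(Real.sqrt p : ℂ) • 1, (Real.sqrt (1 - p) : ℂ) • pauliX]

/-- Kraus operators {√q I, √(1-q) Z} of the phase-flip channel. -/
def phaseFlipK (q : ℝ) : Fin 2 → Matrix (Fin 2) (Fin 2) ℂ :=
  ![(Real.sqrt q : ℂ) • 1, (Real.sqrt (1 - q) : ℂ) • pauliZ]

/-- Kraus operators {√s X, √(1-s) Z} of the third Pauli channel. -/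
def mixedXZK (s : ℝ) : Fin 2 → Matrix (Fin 2) (Fin 2) ℂ :=
  ![(Real.sqrt s : ℂ) • pauliX, (Real.sqrt (1 - s) : ℂ) • pauliZ]

/-! If a positive semidefinite `P` has `tr(P (E ⊗ I)(|ψ⟩⟨ψ|)) = 0`, then `P` kills every vector
`(K ⊗ I) ψ` with `K` a Kraus operator of `E`, hence every such vector with `K ∈ supp E`, since
these `K` form a subspace. A POVM element detecting `E₃` and vanishing on the outputs of `E₁` and
`E₂` therefore also vanishes on the output of `E₃` once `supp E₃ ⊆ supp E₁ + supp E₂`. For the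
Pauli channels this inclusion holds because the Kraus operators of `E₃` are multiples of `X` and
`Z`, which are nonzero multiples of Kraus operators of `E₁` and `E₂`. -/

open Submodule Set

def krausAnnihilator {ι κ R : Type*} [Fintype ι] [Fintype κ] [DecidableEq κ] [CommSemiring R]
    (A : Matrix (ι × κ) (ι × κ) R) (ψ : ι × κ → R) : Submodule R (Matrix ι ι R) where
  carrier := {M | A *ᵥ ((M ⊗ₖ (1 : Matrix κ κ R)) *ᵥ ψ) = 0}
  zero_mem' := by simp
  add_mem' {M N} hM hN := by
    simp_all only [mem_ofPred_eq, add_kronecker, add_mulVec, mulVec_add, add_zero]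
  smul_mem' c M hM := by
    simp_all only [mem_ofPred_eq, smul_kronecker, smul_mulVec, mulVec_smul, smul_zero]

section VecMulVec

variable {n α : Type*} [Fintype n] [CommSemiring α] [StarRing α]

lemma mul_vecMulVec_star_mul_conjTranspose (M : Matrix n n α) (v : n → α) :
    M * vecMulVec v (star v) * Mᴴ = vecMulVec (M *ᵥ v) (star (M *ᵥ v)) := by
  rw [mul_vecMulVec, vecMulVec_mul, star_mulVec]

lemma trace_mul_vecMulVec_star (A : Matrix n n α) (v : n → α) :
    (A * vecMulVec v (star v)).trace = star v ⬝ᵥ A *ᵥ v := by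
  rw [mul_vecMulVec, trace_vecMulVec, dotProduct_comm]

end VecMulVec

section OutputOf

variable {d m da : ℕ}

lemma trace_mul_outputOf (A : Matrix (Fin d × Fin da) (Fin d × Fin da) ℂ)
    (K : Fin m → Matrix (Fin d) (Fin d) ℂ) (ψ : Fin d × Fin da → ℂ) :
    (A * outputOf K ψ).trace =
      ∑ k, star ((K k ⊗ₖ (1 : Matrix (Fin da) (Fin da) ℂ)) *ᵥ ψ) ⬝ᵥ
        A *ᵥ ((K k ⊗ₖ (1 : Matrix (Fin da) (Fin da) ℂ)) *ᵥ ψ) := by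
  simp only [outputOf, Finset.mul_sum, trace_sum, mul_vecMulVec_star_mul_conjTranspose,
    trace_mul_vecMulVec_star]

lemma trace_mul_outputOf_eq_zero_iff {A : Matrix (Fin d × Fin da) (Fin d × Fin da) ℂ}
    (hA : A.PosSemidef) (K : Fin m → Matrix (Fin d) (Fin d) ℂ) (ψ : Fin d × Fin da → ℂ) :
    (A * outputOf K ψ).trace = 0 ↔ span ℂ (range K) ≤ krausAnnihilator A ψ := by
  rw [trace_mul_outputOf, Finset.sum_eq_zero_iff_of_nonneg
    (fun k _ => hA.dotProduct_mulVec_nonneg _), span_le, range_subset_iff]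
  simp only [Finset.mem_univ, true_implies, hA.dotProduct_mulVec_zero_iff]
  rfl

theorem not_unambiguouslyDistinguishable_of_span_le_sup {m₁ m₂ m₃ : ℕ}
    (K₁ : Fin m₁ → Matrix (Fin d) (Fin d) ℂ) (K₂ : Fin m₂ → Matrix (Fin d) (Fin d) ℂ)
    (K₃ : Fin m₃ → Matrix (Fin d) (Fin d) ℂ) (ψ : Fin d × Fin da → ℂ)
    (h : span ℂ (range K₃) ≤ span ℂ (range K₁) ⊔ span ℂ (range K₂)) :
    ¬ UnambiguouslyDistinguishable ![outputOf K₁ ψ, outputOf K₂ ψ, outputOf K₃ ψ] := by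
  rintro ⟨-, P, -, hP, -, hoff, hpos⟩
  have h₁ := (trace_mul_outputOf_eq_zero_iff (hP 2) K₁ ψ).mp (hoff 2 0 (by decide))
  have h₂ := (trace_mul_outputOf_eq_zero_iff (hP 2) K₂ ψ).mp (hoff 2 1 (by decide))
  have h₃ := (trace_mul_outputOf_eq_zero_iff (hP 2) K₃ ψ).mpr (h.trans (sup_le h₁ h₂))
  exact (hpos 2).ne' h₃

end OutputOf

lemma mem_span_range_of_apply_eq_smul {𝕜 ι M : Type*} [Field 𝕜] [AddCommGroup M] [Module 𝕜 M]
    {f : ι → M} {x : M} {c : 𝕜} (hc : c ≠ 0) (i : ι) (h : f i = c • x) :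
    x ∈ span 𝕜 (range f) :=
  (smul_mem_iff _ hc).mp (h ▸ subset_span ⟨i, rfl⟩)

lemma pauliX_mem_span_bitFlipK {p : ℝ} (hp : p < 1) :
    pauliX ∈ span ℂ (range (bitFlipK p)) :=
  mem_span_range_of_apply_eq_smul (by simpa [Real.sqrt_eq_zero', not_le] using hp) 1 rfl

lemma pauliZ_mem_span_phaseFlipK {q : ℝ} (hq : q < 1) :
    pauliZ ∈ span ℂ (range (phaseFlipK q)) :=
  mem_span_range_of_apply_eq_smul (by simpa [Real.sqrt_eq_zero', not_le] using hq) 1 rfl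

lemma span_mixedXZK_le (s : ℝ) : span ℂ (range (mixedXZK s)) ≤ span ℂ {pauliX, pauliZ} := by
  rw [span_le, range_subset_iff]
  intro k
  fin_cases k
  · exact smul_mem _ _ (subset_span (mem_insert _ _))
  · exact smul_mem _ _ (subset_span (mem_insert_of_mem _ rfl))

theorem three_pauli_channels_not_unambig_single_use_general (p q s : ℝ)
    (hp₁ : p < 1) (hq₁ : q < 1) :
    Submodule.span ℂ (Set.range (mixedXZK s)) ≤
      Submodule.span ℂ (Set.range (bitFlipK p)) ⊔
        Submodule.span ℂ (Set.range (phaseFlipK q)) ∧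
    ∀ (da : ℕ) (ψ : Fin 2 × Fin da → ℂ), star ψ ⬝ᵥ ψ = 1 →
      ¬ UnambiguouslyDistinguishable
          ![outputOf (bitFlipK p) ψ, outputOf (phaseFlipK q) ψ, outputOf (mixedXZK s) ψ] := by
  have hsupp : span ℂ (range (mixedXZK s)) ≤
      span ℂ (range (bitFlipK p)) ⊔ span ℂ (range (phaseFlipK q)) :=
    (span_mixedXZK_le s).trans <| span_le.mpr <| insert_subset_iff.mpr
      ⟨mem_sup_left (pauliX_mem_span_bitFlipK hp₁),
        singleton_subset_iff.mpr (mem_sup_right (pauliZ_mem_span_phaseFlipK hq₁))⟩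
  exact ⟨hsupp, fun da ψ _ => not_unambiguouslyDistinguishable_of_span_le_sup _ _ _ ψ hsupp⟩

/-- supp(E₃) ⊆ supp(E₁) + supp(E₂) for the three Pauli channels, so they
cannot be unambiguously discriminated by a single use: for every ancilla dimension and
every unit input vector, the three output states are not unambiguously distinguishable. -/
theorem three_pauli_channels_not_unambig_single_use (p q s : ℝ)
    (hp₀ : 0 < p) (hp₁ : p < 1) (hq₀ : 0 < q) (hq₁ : q < 1) (hs₀ : 0 < s) (hs₁ : s < 1) :
    Submodule.span ℂ (Set.range (mixedXZK s)) ≤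
      Submodule.span ℂ (Set.range (bitFlipK p)) ⊔
        Submodule.span ℂ (Set.range (phaseFlipK q)) ∧
    ∀ (da : ℕ) (ψ : Fin 2 × Fin da → ℂ), star ψ ⬝ᵥ ψ = 1 →
      ¬ UnambiguouslyDistinguishable
          ![outputOf (bitFlipK p) ψ, outputOf (phaseFlipK q) ψ, outputOf (mixedXZK s) ψ] :=
  three_pauli_channels_not_unambig_single_use_general p q s hp₁ hq₁
end
end

section
/- Let 0 < p < 1, 0 < q < 1, 0 < s < 1, and define the Pauli channels E_1, E_2, E_3 on 2×2 matrices with Kraus operators {√p I, √(1−p) X}, {√q I, √(1−q) Z}, and {√s X, √(1−s) Z}, respectively. Then the supports of E_1, E_2, E_3 are pairwise non-contained in one another, and consequently E_1, E_2, E_3 can be unambiguously discriminated by three uses: there exist an ancilla dimension d_a and a unit vector ψ ∈ (ℂ²)^{⊗3} ⊗ ℂ^{d_a} such that the output states (E_i^{⊗3} ⊗ I)(|ψ⟩⟨ψ|), i = 1,2,3, are unambiguously distinguishable. -/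
open Matrix Kronecker
open scoped ComplexOrder

noncomputable section

/-- N-fold Kronecker (tensor) power of a family of matrices. -/
def krausPow {d m : ℕ} (K : Fin m → Matrix (Fin d) (Fin d) ℂ) (N : ℕ)
    (ks : Fin N → Fin m) : Matrix (Fin N → Fin d) (Fin N → Fin d) ℂ :=
  fun a b => ∏ t, K (ks t) (a t) (b t)

/-- The output state (E^{⊗N} ⊗ I)(|ψ⟩⟨ψ|) for the operation with Kraus operators K. -/
def outputPowOf {d m : ℕ} (K : Fin m → Matrix (Fin d) (Fin d) ℂ) (N da : ℕ)
    (ψ : (Fin N → Fin d) × Fin da → ℂ) :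
    Matrix ((Fin N → Fin d) × Fin da) ((Fin N → Fin d) × Fin da) ℂ :=
  ∑ ks : Fin N → Fin m,
    (krausPow K N ks ⊗ₖ (1 : Matrix (Fin da) (Fin da) ℂ)) * vecMulVec ψ (star ψ) *
      (krausPow K N ks ⊗ₖ (1 : Matrix (Fin da) (Fin da) ℂ))ᴴ

/-!
Under the Hilbert–Schmidt pairing `tr (Aᴴ * B)` the matrices `I`, `X`, `Z` are orthogonal, and the
three supports are `span {I, X}`, `span {I, Z}` and `span {X, Z}`; a Pauli matrix orthogonal to one
support but not to another shows that the latter is not contained in the former.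

For the discrimination, send the maximally entangled state `Φ` of `(ℂ²)^{⊗3}` and an
8-dimensional ancilla. Since `⟪(A ⊗ I) Φ, (B ⊗ I) Φ⟫ = tr (Aᴴ * B) / 8`, the vectors `(P ⊗ I) Φ`
for the Pauli strings `P = XXI, ZZI, XZZ` are orthonormal, and the overlap of `(P ⊗ I) Φ` with the
output of `E^{⊗3}` vanishes exactly when some factor of `P` is orthogonal to the support of `E`.
Each string has such a factor for the two channels other than its own and none for its own, so the
three rank-one projections, completed by the inconclusive outcome `1 - ∑ Πᵢ`, form the
unambiguous measurement.
-/

/-- `P` is orthogonal to the support of the operation with Kraus operators `K`, for the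
Hilbert–Schmidt inner product `tr (Aᴴ * B)`. -/
def HSOrthogonal {n m : Type*} [Fintype n] (P : Matrix n n ℂ) (K : m → Matrix n n ℂ) : Prop :=
  ∀ k, (Pᴴ * K k).trace = 0

theorem not_span_range_le_of_hsOrthogonal {n m m' : Type*} [Fintype n] {P : Matrix n n ℂ}
    {K : m → Matrix n n ℂ} {K' : m' → Matrix n n ℂ}
    (hK : ¬ HSOrthogonal P K) (hK' : HSOrthogonal P K') :
    ¬ Submodule.span ℂ (Set.range K) ≤ Submodule.span ℂ (Set.range K') := by
  let L : Matrix n n ℂ →ₗ[ℂ] ℂ := Matrix.traceLinearMap n ℂ ℂ ∘ₗ LinearMap.mulLeft ℂ Pᴴ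
  have hL : Submodule.span ℂ (Set.range K') ≤ LinearMap.ker L :=
    Submodule.span_le.2 <| Set.range_subset_iff.2 hK'
  intro h
  exact hK fun k => hL (h (Submodule.subset_span ⟨k, rfl⟩))

section Vectorization

variable {m n : Type*} [Fintype m] [Fintype n]

theorem kronecker_one_mulVec_vec [DecidableEq m] (A : Matrix n n ℂ) (X : Matrix m n ℂ) :
    (A ⊗ₖ (1 : Matrix m m ℂ)) *ᵥ vec X = vec (X * Aᵀ) := by
  rw [kronecker_mulVec_vec, Matrix.one_mul]

theorem star_vec_mul_transpose_dotProduct [DecidableEq n] {X : Matrix m n ℂ} {c : ℂ}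
    (hX : Xᴴ * X = c • 1) (A B : Matrix n n ℂ) :
    star (vec (X * Aᵀ)) ⬝ᵥ vec (X * Bᵀ) = c * (Aᴴ * B).trace := by
  rw [star_vec_dotProduct_vec, conjTranspose_mul, Matrix.mul_assoc, ← Matrix.mul_assoc Xᴴ, hX,
    Matrix.smul_mul, Matrix.one_mul, Matrix.mul_smul, trace_smul, smul_eq_mul,
    conjTranspose_transpose_eq_transpose_conjTranspose, ← transpose_mul, trace_transpose,
    trace_mul_comm]

end Vectorization

theorem trace_conjTranspose_krausPow_mul_krausPow {d m m' N : ℕ}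
    (A : Fin m → Matrix (Fin d) (Fin d) ℂ) (B : Fin m' → Matrix (Fin d) (Fin d) ℂ)
    (as : Fin N → Fin m) (bs : Fin N → Fin m') :
    ((krausPow A N as)ᴴ * krausPow B N bs).trace = ∏ t, ((A (as t))ᴴ * B (bs t)).trace := by
  simp_rw [← star_vec_dotProduct_vec, dotProduct, Fintype.prod_sum]
  rw [← (Equiv.arrowProdEquivProdArrow (Fin N) (fun _ => Fin d) (fun _ => Fin d)).sum_comp]
  simp [krausPow, Finset.prod_mul_distrib]

section MaxEntangled

variable (ι : Type*) [Fintype ι] [DecidableEq ι]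

/-- The maximally entangled state of `ι` with an ancilla of the same size is
`vec (maxEntangled ι)`. -/
def maxEntangled : Matrix (Fin (Fintype.card ι)) ι ℂ :=
  ((Real.sqrt (Fintype.card ι) : ℂ))⁻¹ • (1 : Matrix ι ι ℂ).submatrix (Fintype.equivFin ι).symm id

theorem conjTranspose_maxEntangled_mul_self :
    (maxEntangled ι)ᴴ * maxEntangled ι = ((Fintype.card ι : ℂ))⁻¹ • 1 := by
  have hc : star ((Real.sqrt (Fintype.card ι) : ℂ))⁻¹ * ((Real.sqrt (Fintype.card ι) : ℂ))⁻¹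
      = ((Fintype.card ι : ℂ))⁻¹ := by
    rw [star_inv₀, Complex.star_def, Complex.conj_ofReal, ← mul_inv, ← Complex.ofReal_mul,
      Real.mul_self_sqrt (Nat.cast_nonneg _), Complex.ofReal_natCast]
  rw [maxEntangled, conjTranspose_smul, conjTranspose_submatrix, Matrix.smul_mul, Matrix.mul_smul,
    smul_smul, submatrix_mul_equiv, conjTranspose_one, Matrix.one_mul, submatrix_id_id, hc]

theorem star_vec_maxEntangled_dotProduct [Nonempty ι] :
    star (vec (maxEntangled ι)) ⬝ᵥ vec (maxEntangled ι) = 1 := by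
  rw [star_vec_dotProduct_vec, conjTranspose_maxEntangled_mul_self, trace_smul, trace_one,
    smul_eq_mul, inv_mul_cancel₀ (Nat.cast_ne_zero.2 Fintype.card_ne_zero)]

end MaxEntangled

theorem trace_vecMulVec_mul_conj {μ : Type*} [Fintype μ] (φ v : μ → ℂ) (M : Matrix μ μ ℂ) :
    (vecMulVec φ (star φ) * (M * vecMulVec v (star v) * Mᴴ)).trace
      = Complex.normSq (star φ ⬝ᵥ (M *ᵥ v)) := by
  rw [mul_vecMulVec, vecMulVec_mul (M *ᵥ v), ← star_mulVec, vecMulVec_mul_vecMulVec,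
    trace_vecMulVec, dotProduct_smul, smul_eq_mul, Complex.normSq_eq_conj_mul_self, mul_comm,
    ← Complex.star_def, ← star_dotProduct_star, star_star, dotProduct_comm]

theorem trace_vecMulVec_mul_outputPowOf {d m N da : ℕ} (K : Fin m → Matrix (Fin d) (Fin d) ℂ)
    (φ ψ : (Fin N → Fin d) × Fin da → ℂ) :
    (vecMulVec φ (star φ) * outputPowOf K N da ψ).trace
      = ∑ ks, Complex.normSq
          (star φ ⬝ᵥ ((krausPow K N ks ⊗ₖ (1 : Matrix (Fin da) (Fin da) ℂ)) *ᵥ ψ)) := by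
  rw [outputPowOf, Matrix.mul_sum, trace_sum, Complex.ofReal_sum]
  exact Finset.sum_congr rfl fun ks _ => trace_vecMulVec_mul_conj _ _ _

section PauliStringMeasurement

variable {d m m' N da : ℕ} {X : Matrix (Fin da) (Fin N → Fin d) ℂ} {c : ℂ}
  (Q : Fin m' → Matrix (Fin d) (Fin d) ℂ) (v : Fin N → Fin m')

theorem trace_vecMulVec_mul_outputPowOf_vec (hX : Xᴴ * X = c • 1)
    (K : Fin m → Matrix (Fin d) (Fin d) ℂ) :
    (vecMulVec (vec (X * (krausPow Q N v)ᵀ)) (star (vec (X * (krausPow Q N v)ᵀ))) *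
        outputPowOf K N da (vec X)).trace
      = ∑ ks : Fin N → Fin m, Complex.normSq (c * ∏ t, ((Q (v t))ᴴ * K (ks t)).trace) := by
  simp_rw [trace_vecMulVec_mul_outputPowOf, kronecker_one_mulVec_vec,
    star_vec_mul_transpose_dotProduct hX, trace_conjTranspose_krausPow_mul_krausPow]

theorem trace_vecMulVec_mul_outputPowOf_vec_eq_zero (hX : Xᴴ * X = c • 1)
    {K : Fin m → Matrix (Fin d) (Fin d) ℂ} (h : ∃ t, HSOrthogonal (Q (v t)) K) :
    (vecMulVec (vec (X * (krausPow Q N v)ᵀ)) (star (vec (X * (krausPow Q N v)ᵀ))) *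
        outputPowOf K N da (vec X)).trace = 0 := by
  obtain ⟨t, ht⟩ := h
  rw [trace_vecMulVec_mul_outputPowOf_vec Q v hX, Complex.ofReal_eq_zero]
  refine Finset.sum_eq_zero fun ks _ => ?_
  rw [Finset.prod_eq_zero (Finset.mem_univ t) (ht (ks t)), mul_zero, map_zero]

theorem trace_vecMulVec_mul_outputPowOf_vec_pos (hX : Xᴴ * X = c • 1) (hc : c ≠ 0)
    {K : Fin m → Matrix (Fin d) (Fin d) ℂ} (h : ∀ t, ¬ HSOrthogonal (Q (v t)) K) :
    0 < (vecMulVec (vec (X * (krausPow Q N v)ᵀ)) (star (vec (X * (krausPow Q N v)ᵀ))) *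
        outputPowOf K N da (vec X)).trace := by
  simp only [HSOrthogonal, not_forall] at h
  choose ks hks using h
  rw [trace_vecMulVec_mul_outputPowOf_vec Q v hX, Complex.zero_lt_real]
  refine Finset.sum_pos' (fun _ _ => Complex.normSq_nonneg _) ⟨ks, Finset.mem_univ _, ?_⟩
  exact Complex.normSq_pos.2 (mul_ne_zero hc (Finset.prod_ne_zero_iff.2 fun t _ => hks t))

theorem star_vec_krausPow_dotProduct (hX : Xᴴ * X = c • 1)
    (hQ : ∀ a b, ((Q a)ᴴ * Q b).trace = if a = b then (d : ℂ) else 0) (w : Fin N → Fin m') :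
    star (vec (X * (krausPow Q N v)ᵀ)) ⬝ᵥ vec (X * (krausPow Q N w)ᵀ)
      = if v = w then c * d ^ N else 0 := by
  rw [star_vec_mul_transpose_dotProduct hX, trace_conjTranspose_krausPow_mul_krausPow]
  simp_rw [hQ]
  split_ifs with hvw
  · simp [hvw]
  · obtain ⟨t, ht⟩ := Function.ne_iff.1 hvw
    rw [Finset.prod_eq_zero (Finset.mem_univ t) (if_neg ht), mul_zero]

end PauliStringMeasurement

theorem unambiguouslyDistinguishable_of_orthonormal {μ : Type*} [Fintype μ] [DecidableEq μ]
    {n : ℕ} (σ : Fin n → Matrix μ μ ℂ) (φ : Fin n → μ → ℂ)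
    (hφ : ∀ i j, star (φ i) ⬝ᵥ φ j = if i = j then 1 else 0)
    (hoff : ∀ i j, i ≠ j → (vecMulVec (φ i) (star (φ i)) * σ j).trace = 0)
    (hdiag : ∀ i, 0 < (vecMulVec (φ i) (star (φ i)) * σ i).trace) :
    UnambiguouslyDistinguishable σ := by
  set P := ∑ i, vecMulVec (φ i) (star (φ i)) with hP
  have hP_herm : Pᴴ = P := by
    simp [hP, conjTranspose_sum, conjTranspose_vecMulVec]
  have hP_idem : P * P = P := by
    simp [hP, Finset.sum_mul_sum, vecMulVec_mul_vecMulVec, hφ, apply_ite (vecMulVec _)]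
  have h_compl : (1 - P).PosSemidef := by
    have : 1 - P = (1 - P)ᴴ * (1 - P) := by
      rw [conjTranspose_sub, conjTranspose_one, hP_herm, Matrix.sub_mul, Matrix.mul_sub,
        Matrix.mul_sub, hP_idem, Matrix.one_mul, Matrix.mul_one, Matrix.one_mul, sub_self, sub_zero]
    rw [this]
    exact posSemidef_conjTranspose_mul_self _
  exact ⟨1 - P, fun i => vecMulVec (φ i) (star (φ i)), h_compl,
    fun i => posSemidef_vecMulVec_self_star _, sub_add_cancel _ _, hoff, hdiag⟩

theorem exists_unambiguouslyDistinguishable_outputPowOf {d m m' n N : ℕ} [NeZero d]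
    (K : Fin n → Fin m → Matrix (Fin d) (Fin d) ℂ) (Q : Fin m' → Matrix (Fin d) (Fin d) ℂ)
    (hQ : ∀ a b, ((Q a)ᴴ * Q b).trace = if a = b then (d : ℂ) else 0)
    (v : Fin n → Fin N → Fin m')
    (hoff : ∀ i j, i ≠ j → ∃ t, HSOrthogonal (Q (v i t)) (K j))
    (hdiag : ∀ i t, ¬ HSOrthogonal (Q (v i t)) (K i)) :
    ∃ da : ℕ, 0 < da ∧ ∃ ψ : (Fin N → Fin d) × Fin da → ℂ, star ψ ⬝ᵥ ψ = 1 ∧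
      UnambiguouslyDistinguishable fun i => outputPowOf (K i) N da ψ := by
  have hX := conjTranspose_maxEntangled_mul_self (Fin N → Fin d)
  have hcard : (Fintype.card (Fin N → Fin d) : ℂ) = (d : ℂ) ^ N := by simp
  have hv : Function.Injective v := fun i j hij => by
    by_contra hne
    obtain ⟨t, ht⟩ := hoff i j hne
    exact hdiag j t (hij ▸ ht)
  refine ⟨_, Fintype.card_pos, _, star_vec_maxEntangled_dotProduct _,
    unambiguouslyDistinguishable_of_orthonormal _
      (fun i => vec (maxEntangled _ * (krausPow Q N (v i))ᵀ)) (fun i j => ?_)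
      (fun i j hij => trace_vecMulVec_mul_outputPowOf_vec_eq_zero Q (v i) hX (hoff i j hij))
      (fun i => trace_vecMulVec_mul_outputPowOf_vec_pos Q (v i) hX (by simp [NeZero.ne d])
        (hdiag i))⟩
  rw [star_vec_krausPow_dotProduct Q (v i) hX hQ, hcard,
    inv_mul_cancel₀ (pow_ne_zero _ (Nat.cast_ne_zero.2 (NeZero.ne d)))]
  exact if_congr hv.eq_iff rfl rfl

def pauliIXZ : Fin 3 → Matrix (Fin 2) (Fin 2) ℂ := ![1, pauliX, pauliZ]

theorem trace_conjTranspose_pauliIXZ_mul (a b : Fin 3) :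
    ((pauliIXZ a)ᴴ * pauliIXZ b).trace = if a = b then 2 else 0 := by
  fin_cases a <;> fin_cases b <;>
    simp [pauliIXZ, pauliX, pauliZ, trace_fin_two, mul_apply, conjTranspose_apply] <;> norm_num

theorem hsOrthogonal_pauliZ_bitFlipK (p : ℝ) : HSOrthogonal pauliZ (bitFlipK p) := by
  intro k
  fin_cases k <;> simp [bitFlipK, pauliX, pauliZ, trace_fin_two, mul_apply, conjTranspose_apply]

theorem hsOrthogonal_pauliX_phaseFlipK (q : ℝ) : HSOrthogonal pauliX (phaseFlipK q) := by
  intro k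
  fin_cases k <;> simp [phaseFlipK, pauliX, pauliZ, trace_fin_two, mul_apply, conjTranspose_apply]

theorem hsOrthogonal_one_mixedXZK (s : ℝ) : HSOrthogonal 1 (mixedXZK s) := by
  intro k
  fin_cases k <;> simp [mixedXZK, pauliX, pauliZ, trace_fin_two]

theorem not_hsOrthogonal_one_bitFlipK {p : ℝ} (hp : 0 < p) : ¬ HSOrthogonal 1 (bitFlipK p) :=
  fun h => Real.sqrt_ne_zero'.2 hp (by simpa [bitFlipK, trace_fin_two] using h 0)

theorem not_hsOrthogonal_pauliX_bitFlipK {p : ℝ} (hp : p < 1) :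
    ¬ HSOrthogonal pauliX (bitFlipK p) :=
  fun h => Real.sqrt_ne_zero'.2 (sub_pos.2 hp) (by
    simpa [bitFlipK, pauliX, trace_fin_two, mul_apply, conjTranspose_apply] using h 1)

theorem not_hsOrthogonal_one_phaseFlipK {q : ℝ} (hq : 0 < q) : ¬ HSOrthogonal 1 (phaseFlipK q) :=
  fun h => Real.sqrt_ne_zero'.2 hq (by simpa [phaseFlipK, trace_fin_two] using h 0)

theorem not_hsOrthogonal_pauliZ_phaseFlipK {q : ℝ} (hq : q < 1) :
    ¬ HSOrthogonal pauliZ (phaseFlipK q) :=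
  fun h => Real.sqrt_ne_zero'.2 (sub_pos.2 hq) (by
    simpa [phaseFlipK, pauliZ, trace_fin_two, mul_apply, conjTranspose_apply] using h 1)

theorem not_hsOrthogonal_pauliX_mixedXZK {s : ℝ} (hs : 0 < s) :
    ¬ HSOrthogonal pauliX (mixedXZK s) :=
  fun h => Real.sqrt_ne_zero'.2 hs (by
    simpa [mixedXZK, pauliX, trace_fin_two, mul_apply, conjTranspose_apply] using h 0)

theorem not_hsOrthogonal_pauliZ_mixedXZK {s : ℝ} (hs : s < 1) :
    ¬ HSOrthogonal pauliZ (mixedXZK s) :=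
  fun h => Real.sqrt_ne_zero'.2 (sub_pos.2 hs) (by
    simpa [mixedXZK, pauliZ, trace_fin_two, mul_apply, conjTranspose_apply] using h 1)

def threePauliChannels (p q s : ℝ) : Fin 3 → Fin 2 → Matrix (Fin 2) (Fin 2) ℂ :=
  ![bitFlipK p, phaseFlipK q, mixedXZK s]

/-- The Pauli strings `XXI`, `ZZI`, `XZZ`, as indices into `pauliIXZ`. -/
def separatingStrings : Fin 3 → Fin 3 → Fin 3 := ![![1, 1, 0], ![2, 2, 0], ![1, 2, 2]]

theorem exists_hsOrthogonal_threePauliChannels (p q s : ℝ) (i j : Fin 3) (hij : i ≠ j) :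
    ∃ t, HSOrthogonal (pauliIXZ (separatingStrings i t)) (threePauliChannels p q s j) := by
  fin_cases i <;> fin_cases j
  · exact absurd rfl hij
  · exact ⟨0, hsOrthogonal_pauliX_phaseFlipK q⟩
  · exact ⟨2, hsOrthogonal_one_mixedXZK s⟩
  · exact ⟨0, hsOrthogonal_pauliZ_bitFlipK p⟩
  · exact absurd rfl hij
  · exact ⟨2, hsOrthogonal_one_mixedXZK s⟩
  · exact ⟨1, hsOrthogonal_pauliZ_bitFlipK p⟩
  · exact ⟨0, hsOrthogonal_pauliX_phaseFlipK q⟩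
  · exact absurd rfl hij

theorem not_hsOrthogonal_threePauliChannels {p q s : ℝ} (hp₀ : 0 < p) (hp₁ : p < 1)
    (hq₀ : 0 < q) (hq₁ : q < 1) (hs₀ : 0 < s) (hs₁ : s < 1) (i t : Fin 3) :
    ¬ HSOrthogonal (pauliIXZ (separatingStrings i t)) (threePauliChannels p q s i) := by
  fin_cases i <;> fin_cases t
  · exact not_hsOrthogonal_pauliX_bitFlipK hp₁
  · exact not_hsOrthogonal_pauliX_bitFlipK hp₁
  · exact not_hsOrthogonal_one_bitFlipK hp₀
  · exact not_hsOrthogonal_pauliZ_phaseFlipK hq₁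
  · exact not_hsOrthogonal_pauliZ_phaseFlipK hq₁
  · exact not_hsOrthogonal_one_phaseFlipK hq₀
  · exact not_hsOrthogonal_pauliX_mixedXZK hs₀
  · exact not_hsOrthogonal_pauliZ_mixedXZK hs₁
  · exact not_hsOrthogonal_pauliZ_mixedXZK hs₁

/-- the supports of the three Pauli channels are pairwise non-contained
in one another, and consequently the channels can be unambiguously discriminated by
three uses. -/
theorem three_pauli_channels_unambig_three_uses (p q s : ℝ)
    (hp₀ : 0 < p) (hp₁ : p < 1) (hq₀ : 0 < q) (hq₁ : q < 1) (hs₀ : 0 < s) (hs₁ : s < 1) :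
    (¬ Submodule.span ℂ (Set.range (bitFlipK p)) ≤
        Submodule.span ℂ (Set.range (phaseFlipK q)) ∧
     ¬ Submodule.span ℂ (Set.range (phaseFlipK q)) ≤
        Submodule.span ℂ (Set.range (bitFlipK p)) ∧
     ¬ Submodule.span ℂ (Set.range (bitFlipK p)) ≤
        Submodule.span ℂ (Set.range (mixedXZK s)) ∧
     ¬ Submodule.span ℂ (Set.range (mixedXZK s)) ≤
        Submodule.span ℂ (Set.range (bitFlipK p)) ∧
     ¬ Submodule.span ℂ (Set.range (phaseFlipK q)) ≤
        Submodule.span ℂ (Set.range (mixedXZK s)) ∧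
     ¬ Submodule.span ℂ (Set.range (mixedXZK s)) ≤
        Submodule.span ℂ (Set.range (phaseFlipK q))) ∧
    ∃ da : ℕ, 0 < da ∧ ∃ ψ : (Fin 3 → Fin 2) × Fin da → ℂ, star ψ ⬝ᵥ ψ = 1 ∧
      UnambiguouslyDistinguishable
        ![outputPowOf (bitFlipK p) 3 da ψ, outputPowOf (phaseFlipK q) 3 da ψ,
          outputPowOf (mixedXZK s) 3 da ψ] := by
  refine ⟨⟨not_span_range_le_of_hsOrthogonal (not_hsOrthogonal_pauliX_bitFlipK hp₁)
      (hsOrthogonal_pauliX_phaseFlipK q),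
    not_span_range_le_of_hsOrthogonal (not_hsOrthogonal_pauliZ_phaseFlipK hq₁)
      (hsOrthogonal_pauliZ_bitFlipK p),
    not_span_range_le_of_hsOrthogonal (not_hsOrthogonal_one_bitFlipK hp₀)
      (hsOrthogonal_one_mixedXZK s),
    not_span_range_le_of_hsOrthogonal (not_hsOrthogonal_pauliZ_mixedXZK hs₁)
      (hsOrthogonal_pauliZ_bitFlipK p),
    not_span_range_le_of_hsOrthogonal (not_hsOrthogonal_one_phaseFlipK hq₀)
      (hsOrthogonal_one_mixedXZK s),
    not_span_range_le_of_hsOrthogonal (not_hsOrthogonal_pauliX_mixedXZK hs₀)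
      (hsOrthogonal_pauliX_phaseFlipK q)⟩, ?_⟩
  obtain ⟨da, hda, ψ, hψ, hU⟩ := exists_unambiguouslyDistinguishable_outputPowOf
    (threePauliChannels p q s) pauliIXZ
    (fun a b => by rw [trace_conjTranspose_pauliIXZ_mul]; norm_num) separatingStrings
    (exists_hsOrthogonal_threePauliChannels p q s)
    (not_hsOrthogonal_threePauliChannels hp₀ hp₁ hq₀ hq₁ hs₀ hs₁)
  refine ⟨da, hda, ψ, hψ, ?_⟩
  convert hU using 1
  funext i
  fin_cases i <;> rfl
end
end
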